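/- Let n ≥ 1, μ > 2, and let u be a classical compactly supported solution of the linear damped wave equation ∂_t²u − Δu + (μ/(1+t))∂_t u = 0 on [0,∞) × ℝⁿ. Define E₀(t) := (1/2)∫_{ℝⁿ}( |∇_x u|² + (∂_t u)² ) dx, E₃(t) := ∫_{ℝⁿ}( u ∂_t u + (μ−1) u²/(2(1+t)) ) dx, and E₄(t) := E₀(t) + E₃(t)/(1+t). Then E₄ is differentiable on (0,∞) and satisfies, for all t > 0: d/dt E₄(t) + (2/(1+t)) E₄(t) + ((μ−2)/(1+t)) ∫_{ℝⁿ} (∂_t u(t,x))² dx = 0. -/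

import Mathlib

open MeasureTheory Real Set

noncomputable section

/-- First time derivative `∂ₜu`. -/
def tderiv {n : ℕ} (u : ℝ → (Fin n → ℝ) → ℝ) (t : ℝ) (x : Fin n → ℝ) : ℝ :=
  deriv (fun τ => u τ x) t

/-- Second time derivative `∂ₜ²u`. -/
def tderiv2 {n : ℕ} (u : ℝ → (Fin n → ℝ) → ℝ) (t : ℝ) (x : Fin n → ℝ) : ℝ :=
  deriv (fun τ => tderiv u τ x) t

/-- `i`-th spatial partial derivative `∂ᵢ g`. -/
def pd {n : ℕ} (i : Fin n) (g : (Fin n → ℝ) → ℝ) : (Fin n → ℝ) → ℝ :=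
  fun x => fderiv ℝ g x (Pi.single i 1)

/-- Squared Euclidean norm of the spatial gradient, `|∇g(x)|²`. -/
def gradSq {n : ℕ} (g : (Fin n → ℝ) → ℝ) (x : Fin n → ℝ) : ℝ :=
  ∑ i, (pd i g x) ^ 2

/-- Spatial Laplacian `Δg(x)`. -/
def lap {n : ℕ} (g : (Fin n → ℝ) → ℝ) (x : Fin n → ℝ) : ℝ :=
  ∑ i, pd i (pd i g) x

/-- A classical compactly supported solution of
`∂ₜ²u − Δu + (μ/(1+t)) ∂ₜu = 0` on `[0,∞) × ℝⁿ`:  `u` is `C²` on `[0,∞) × ℝⁿ`,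
satisfies the equation pointwise for `t ≥ 0`, and for every `T > 0` vanishes outside
a compact spatial set for all `t ∈ [0,T]`. -/
def IsSol (n : ℕ) (μ : ℝ) (u : ℝ → (Fin n → ℝ) → ℝ) : Prop :=
  ContDiffOn ℝ 2 (fun q : ℝ × (Fin n → ℝ) => u q.1 q.2) (Set.Ici (0:ℝ) ×ˢ Set.univ) ∧
  (∀ t, 0 ≤ t → ∀ x, tderiv2 u t x - lap (u t) x + (μ / (1 + t)) * tderiv u t x = 0) ∧
  (∀ T, 0 < T → ∃ K : Set (Fin n → ℝ), IsCompact K ∧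
    ∀ t ∈ Set.Icc (0:ℝ) T, ∀ x, x ∉ K → u t x = 0)

/-- The energy `E₀(t) = (1/2)∫ (|∇u|² + (∂ₜu)²) dx`. -/
def E0 {n : ℕ} (u : ℝ → (Fin n → ℝ) → ℝ) (t : ℝ) : ℝ :=
  (1 / 2) * ∫ x, (gradSq (u t) x + (tderiv u t x) ^ 2)

/-- The functional `E₃(t) = ∫ ( u ∂ₜu + (μ−1) u²/(2(1+t)) ) dx`. -/
def E3 {n : ℕ} (μ : ℝ) (u : ℝ → (Fin n → ℝ) → ℝ) (t : ℝ) : ℝ :=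
  ∫ x, (u t x * tderiv u t x + (μ - 1) * (u t x) ^ 2 / (2 * (1 + t)))

/-- `E₄(t) = E₀(t) + E₃(t)/(1+t)`. -/
def E4 {n : ℕ} (μ : ℝ) (u : ℝ → (Fin n → ℝ) → ℝ) (t : ℝ) : ℝ :=
  E0 u t + E3 μ u t / (1 + t)

/-!
Differentiating under the integral sign (for times near `t` all integrands are continuous and
supported in one compact set), `E₄'(t)` is the integral of the time derivative of the energy
density. Once `∂ₜ²u` is eliminated with the equation, that derivative equals
`-(2/(1+t))·density - ((μ-2)/(1+t))·(∂ₜu)²` plus the divergence `∑ᵢ ∂ᵢ((∂ₜu + u/(1+t)) ∂ᵢu)`,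
whose integral vanishes by integration by parts because `u(t)` has compact support.
-/

open Function Filter Topology

theorem hasDerivAt_integral_of_continuousOn_of_eqOn_zero {E : Type*} [NormedAddCommGroup E]
    [MeasurableSpace E] [BorelSpace E] {ν : Measure E} [IsFiniteMeasureOnCompacts ν]
    {φ ψ : ℝ → E → ℝ} {s : Set ℝ} {K : Set E} {t : ℝ} (hs : IsOpen s) (ht : t ∈ s)
    (hK : IsCompact K) (hφ : ∀ τ ∈ s, Continuous (φ τ)) (hφt : Integrable (φ t) ν)
    (hψ : ContinuousOn (uncurry ψ) (s ×ˢ univ)) (hψK : ∀ τ ∈ s, ∀ x ∉ K, ψ τ x = 0)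
    (hder : ∀ τ ∈ s, ∀ x, HasDerivAt (φ · x) (ψ τ x) τ) :
    HasDerivAt (fun τ => ∫ x, φ τ x ∂ν) (∫ x, ψ t x ∂ν) t := by
  obtain ⟨ε, hε, hball⟩ := Metric.isOpen_iff.1 hs t ht
  have hclosedBall : Metric.closedBall t (ε / 2) ⊆ s :=
    (Metric.closedBall_subset_ball (by linarith)).trans hball
  obtain ⟨C, hC⟩ := ((isCompact_closedBall t (ε / 2)).prod hK).exists_bound_of_continuousOn
    (hψ.mono (prod_mono hclosedBall (subset_univ K)))
  have hψt : Continuous (ψ t) :=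
    (hψ.comp_continuous (Continuous.prodMk_right t) fun x => ⟨ht, mem_univ x⟩ :)
  refine (hasDerivAt_integral_of_dominated_loc_of_deriv_le (bound := K.indicator fun _ => C)
    (Metric.ball_mem_nhds t (half_pos hε)) ?_ hφt hψt.aestronglyMeasurable ?_ ?_ ?_).2
  · filter_upwards [hs.mem_nhds ht] with τ hτ using (hφ τ hτ).aestronglyMeasurable
  · refine .of_forall fun x τ hτ => ?_
    have hτs := hclosedBall (Metric.ball_subset_closedBall hτ)
    by_cases hx : x ∈ K
    · simpa [hx] using hC (τ, x) ⟨Metric.ball_subset_closedBall hτ, hx⟩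
    · simp [hx, hψK τ hτs x hx]
  · exact (integrable_indicator_iff hK.measurableSet).2 (integrableOn_const hK.measure_lt_top.ne)
  · exact .of_forall fun x τ hτ =>
      hder τ (hclosedBall (Metric.ball_subset_closedBall hτ)) x

section Regularity

variable {n : ℕ} {w : ℝ → (Fin n → ℝ) → ℝ} {τ : ℝ} {x : Fin n → ℝ}

theorem hasDerivAt_fderiv_uncurry (h : DifferentiableAt ℝ (uncurry w) (τ, x)) :
    HasDerivAt (w · x) (fderiv ℝ (uncurry w) (τ, x) (1, 0)) τ :=
  h.hasFDerivAt.comp_hasDerivAt_of_eq τ ((hasDerivAt_id τ).prodMk (hasDerivAt_const τ x)) rfl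

theorem tderiv_eq_fderiv (h : DifferentiableAt ℝ (uncurry w) (τ, x)) :
    tderiv w τ x = fderiv ℝ (uncurry w) (τ, x) (1, 0) :=
  (hasDerivAt_fderiv_uncurry h).deriv

theorem hasDerivAt_tderiv (h : DifferentiableAt ℝ (uncurry w) (τ, x)) :
    HasDerivAt (w · x) (tderiv w τ x) τ :=
  (hasDerivAt_fderiv_uncurry h).differentiableAt.hasDerivAt

theorem hasFDerivAt_slice (h : DifferentiableAt ℝ (uncurry w) (τ, x)) :
    HasFDerivAt (w τ) ((fderiv ℝ (uncurry w) (τ, x)).comp (.inr ℝ ℝ (Fin n → ℝ))) x :=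
  h.hasFDerivAt.comp x (hasFDerivAt_prodMk_right τ x)

theorem pd_eq_fderiv (h : DifferentiableAt ℝ (uncurry w) (τ, x)) (i : Fin n) :
    pd i (w τ) x = fderiv ℝ (uncurry w) (τ, x) (0, Pi.single i 1) := by
  simp [pd, (hasFDerivAt_slice h).fderiv]

theorem tderiv_eventuallyEq (h : ContDiffAt ℝ 1 (uncurry w) (τ, x)) :
    uncurry (tderiv w) =ᶠ[𝓝 (τ, x)] fun q => fderiv ℝ (uncurry w) q (1, 0) := by
  filter_upwards [h.eventually (by simp)] with q hq
  exact tderiv_eq_fderiv (hq.differentiableAt one_ne_zero)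

theorem pd_eventuallyEq (h : ContDiffAt ℝ 1 (uncurry w) (τ, x)) (i : Fin n) :
    (uncurry fun s => pd i (w s)) =ᶠ[𝓝 (τ, x)]
      fun q => fderiv ℝ (uncurry w) q (0, Pi.single i 1) := by
  filter_upwards [h.eventually (by simp)] with q hq
  exact pd_eq_fderiv (hq.differentiableAt one_ne_zero) i

theorem continuousAt_tderiv (h : ContDiffAt ℝ 1 (uncurry w) (τ, x)) :
    ContinuousAt (uncurry (tderiv w)) (τ, x) :=
  ((h.fderiv_right (m := 0) (by norm_num)).continuousAt.clm_apply continuousAt_const).congr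
    (tderiv_eventuallyEq h).symm

theorem continuousAt_pd (h : ContDiffAt ℝ 1 (uncurry w) (τ, x)) (i : Fin n) :
    ContinuousAt (uncurry fun s => pd i (w s)) (τ, x) :=
  ((h.fderiv_right (m := 0) (by norm_num)).continuousAt.clm_apply continuousAt_const).congr
    (pd_eventuallyEq h i).symm

theorem contDiffAt_tderiv (h : ContDiffAt ℝ 2 (uncurry w) (τ, x)) :
    ContDiffAt ℝ 1 (uncurry (tderiv w)) (τ, x) :=
  ((h.fderiv_right (by norm_num)).clm_apply contDiffAt_const).congr_of_eventuallyEq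
    (tderiv_eventuallyEq (h.of_le (by norm_num)))

theorem contDiffAt_pd (h : ContDiffAt ℝ 2 (uncurry w) (τ, x)) (i : Fin n) :
    ContDiffAt ℝ 1 (uncurry fun s => pd i (w s)) (τ, x) :=
  ((h.fderiv_right (by norm_num)).clm_apply contDiffAt_const).congr_of_eventuallyEq
    (pd_eventuallyEq (h.of_le (by norm_num)) i)

theorem tderiv_pd_eq_pd_tderiv (h : ContDiffAt ℝ 2 (uncurry w) (τ, x)) (i : Fin n) :
    tderiv (fun s => pd i (w s)) τ x = pd i (tderiv w τ) x := by
  have h1 : ContDiffAt ℝ 1 (uncurry w) (τ, x) := h.of_le (by norm_num)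
  have hD : DifferentiableAt ℝ (fderiv ℝ (uncurry w)) (τ, x) :=
    (h.fderiv_right (m := 1) (by norm_num)).differentiableAt one_ne_zero
  rw [tderiv_eq_fderiv ((contDiffAt_pd h i).differentiableAt one_ne_zero),
    pd_eq_fderiv ((contDiffAt_tderiv h).differentiableAt one_ne_zero),
    (pd_eventuallyEq h1 i).fderiv_eq, (tderiv_eventuallyEq h1).fderiv_eq,
    fderiv_clm_apply hD (differentiableAt_const _), fderiv_clm_apply hD (differentiableAt_const _)]
  simpa using h.isSymmSndFDerivAt (by simp) (1, 0) (0, Pi.single i 1)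

theorem continuous_slice (h : ∀ x, ContinuousAt (uncurry w) (τ, x)) : Continuous (w τ) :=
  continuous_iff_continuousAt.2 fun x => (h x).comp (Continuous.prodMk_right τ).continuousAt

theorem differentiable_slice (h : ∀ x, DifferentiableAt ℝ (uncurry w) (τ, x)) :
    Differentiable ℝ (w τ) :=
  fun x => (hasFDerivAt_slice (h x)).differentiableAt

theorem continuous_pd_slice (h : ∀ x, ContDiffAt ℝ 1 (uncurry w) (τ, x)) (i : Fin n) :
    Continuous (pd i (w τ)) :=
  continuous_slice (w := fun s => pd i (w s)) fun x => continuousAt_pd (h x) i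

theorem tderiv_eq_zero_of_eqOn {U : Set (ℝ × (Fin n → ℝ))} (hU : IsOpen U)
    (h : EqOn (uncurry w) 0 U) (hq : (τ, x) ∈ U) : tderiv w τ x = 0 := by
  have hτ : (w · x) =ᶠ[𝓝 τ] 0 :=
    Filter.mem_of_superset ((Continuous.prodMk_left x).continuousAt.preimage_mem_nhds
      (hU.mem_nhds hq)) fun s hs => h hs
  exact hτ.deriv_eq.trans (deriv_const _ _)

theorem pd_eq_zero_of_eqOn {U : Set (ℝ × (Fin n → ℝ))} (hU : IsOpen U)
    (h : EqOn (uncurry w) 0 U) (hq : (τ, x) ∈ U) (i : Fin n) : pd i (w τ) x = 0 := by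
  have hx : w τ =ᶠ[𝓝 x] 0 :=
    Filter.mem_of_superset ((Continuous.prodMk_right τ).continuousAt.preimage_mem_nhds
      (hU.mem_nhds hq)) fun y hy => h hy
  simp [pd, hx.fderiv_eq]

theorem pd_add_const_mul {f g : (Fin n → ℝ) → ℝ} (hf : DifferentiableAt ℝ f x)
    (hg : DifferentiableAt ℝ g x) (c : ℝ) (i : Fin n) :
    pd i (fun y => f y + c * g y) x = pd i f x + c * pd i g x := by
  have hsum : HasFDerivAt (fun y => f y + c * g y) (fderiv ℝ f x + c • fderiv ℝ g x) x :=
    hf.hasFDerivAt.add (hg.hasFDerivAt.const_mul c)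
  simp [pd, hsum.fderiv]

theorem integrable_mul_pd_add_pd_mul {f g : (Fin n → ℝ) → ℝ} (i : Fin n) (hf : Differentiable ℝ f)
    (hg : Differentiable ℝ g) (hf' : Continuous (pd i f)) (hg' : Continuous (pd i g))
    (hfc : HasCompactSupport f) :
    Integrable fun x => f x * pd i g x + pd i f x * g x :=
  ((hf.continuous.mul hg').add (hf'.mul hg.continuous)).integrable_of_hasCompactSupport
    (hfc.mul_right.add (hfc.fderiv_apply ℝ _).mul_right)

theorem integral_mul_pd_add_pd_mul_eq_zero {f g : (Fin n → ℝ) → ℝ} (i : Fin n)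
    (hf : Differentiable ℝ f) (hg : Differentiable ℝ g) (hf' : Continuous (pd i f))
    (hg' : Continuous (pd i g)) (hfc : HasCompactSupport f) :
    ∫ x, (f x * pd i g x + pd i f x * g x) = 0 := by
  have hfg' : Integrable fun x => f x * pd i g x :=
    (hf.continuous.mul hg').integrable_of_hasCompactSupport hfc.mul_right
  have hf'g : Integrable fun x => pd i f x * g x :=
    (hf'.mul hg.continuous).integrable_of_hasCompactSupport (hfc.fderiv_apply ℝ _).mul_right
  have hfg : Integrable fun x => f x * g x :=
    (hf.continuous.mul hg.continuous).integrable_of_hasCompactSupport hfc.mul_right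
  rw [integral_add hfg' hf'g]
  exact add_eq_zero_iff_eq_neg.2 <| integral_mul_fderiv_eq_neg_fderiv_mul_of_integrable hf'g hfg'
    hfg (fun x _ => hf x) (fun x _ => hg x)

end Regularity

def energyDensity {n : ℕ} (μ : ℝ) (u : ℝ → (Fin n → ℝ) → ℝ) (τ : ℝ) (x : Fin n → ℝ) : ℝ :=
  1 / 2 * (gradSq (u τ) x + tderiv u τ x ^ 2) +
    (u τ x * tderiv u τ x + (μ - 1) * u τ x ^ 2 / (2 * (1 + τ))) / (1 + τ)

def energyDensityDeriv {n : ℕ} (μ : ℝ) (u : ℝ → (Fin n → ℝ) → ℝ) (τ : ℝ) (x : Fin n → ℝ) : ℝ :=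
  ∑ i, pd i (u τ) x * pd i (tderiv u τ) x + tderiv u τ x * tderiv2 u τ x +
    (tderiv u τ x ^ 2 + u τ x * tderiv2 u τ x + (μ - 1) * u τ x * tderiv u τ x / (1 + τ) -
      (μ - 1) * u τ x ^ 2 / (2 * (1 + τ) ^ 2)) / (1 + τ) -
    (u τ x * tderiv u τ x + (μ - 1) * u τ x ^ 2 / (2 * (1 + τ))) / (1 + τ) ^ 2

section Support

variable {n : ℕ} {μ : ℝ} {u : ℝ → (Fin n → ℝ) → ℝ} {U : Set (ℝ × (Fin n → ℝ))} {τ : ℝ}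
  {x : Fin n → ℝ}

theorem energyDensity_eq_zero (hU : IsOpen U) (h : EqOn (uncurry u) 0 U) (hq : (τ, x) ∈ U) :
    energyDensity μ u τ x = 0 := by
  simp [energyDensity, gradSq, show u τ x = 0 from h hq, tderiv_eq_zero_of_eqOn hU h hq,
    pd_eq_zero_of_eqOn hU h hq]

theorem energyDensityDeriv_eq_zero (hU : IsOpen U) (h : EqOn (uncurry u) 0 U)
    (hq : (τ, x) ∈ U) : energyDensityDeriv μ u τ x = 0 := by
  simp [energyDensityDeriv, show u τ x = 0 from h hq, tderiv_eq_zero_of_eqOn hU h hq,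
    pd_eq_zero_of_eqOn hU h hq]

end Support

namespace IsSol

variable {n : ℕ} {μ : ℝ} {u : ℝ → (Fin n → ℝ) → ℝ} {t T : ℝ} {K : Set (Fin n → ℝ)}

theorem contDiffAt (hu : IsSol n μ u) (ht : 0 < t) (x : Fin n → ℝ) :
    ContDiffAt ℝ 2 (uncurry u) (t, x) :=
  hu.1.contDiffAt <| mem_of_superset (prod_mem_nhds (Ioi_mem_nhds ht) univ_mem)
    (prod_mono Ioi_subset_Ici_self subset_rfl)

theorem contDiffAt_one (hu : IsSol n μ u) (ht : 0 < t) (x : Fin n → ℝ) :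
    ContDiffAt ℝ 1 (uncurry u) (t, x) :=
  (hu.contDiffAt ht x).of_le one_le_two

theorem differentiable (hu : IsSol n μ u) (ht : 0 < t) : Differentiable ℝ (u t) :=
  differentiable_slice fun x => (hu.contDiffAt_one ht x).differentiableAt one_ne_zero

theorem differentiable_tderiv (hu : IsSol n μ u) (ht : 0 < t) : Differentiable ℝ (tderiv u t) :=
  differentiable_slice fun x =>
    (contDiffAt_tderiv (hu.contDiffAt ht x)).differentiableAt one_ne_zero

theorem differentiable_pd (hu : IsSol n μ u) (ht : 0 < t) (i : Fin n) :
    Differentiable ℝ (pd i (u t)) :=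
  differentiable_slice (w := fun s => pd i (u s))
    fun x => (contDiffAt_pd (hu.contDiffAt ht x) i).differentiableAt one_ne_zero

theorem continuous_pd_tderiv (hu : IsSol n μ u) (ht : 0 < t) (i : Fin n) :
    Continuous (pd i (tderiv u t)) :=
  continuous_pd_slice (fun x => contDiffAt_tderiv (hu.contDiffAt ht x)) i

theorem continuous_pd_pd (hu : IsSol n μ u) (ht : 0 < t) (i : Fin n) :
    Continuous (pd i (pd i (u t))) :=
  continuous_pd_slice (w := fun s => pd i (u s)) (fun x => contDiffAt_pd (hu.contDiffAt ht x) i) i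

theorem continuous_energyDensity (hu : IsSol n μ u) (ht : 0 < t) :
    Continuous (energyDensity μ u t) := by
  have h0 := (hu.differentiable ht).continuous
  have h1 := (hu.differentiable_tderiv ht).continuous
  have h2 := continuous_pd_slice (hu.contDiffAt_one ht)
  unfold energyDensity gradSq
  fun_prop (disch := positivity)

theorem continuousAt_energyDensityDeriv (hu : IsSol n μ u) (ht : 0 < t) (x : Fin n → ℝ) :
    ContinuousAt (uncurry (energyDensityDeriv μ u)) (t, x) := by
  have h := hu.contDiffAt ht x
  have h0 : ContinuousAt (uncurry u) (t, x) := h.continuousAt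
  have h1 : ContinuousAt (uncurry (tderiv u)) (t, x) := continuousAt_tderiv (h.of_le one_le_two)
  have h2 : ContinuousAt (uncurry (tderiv2 u)) (t, x) := continuousAt_tderiv (contDiffAt_tderiv h)
  have h3 (i : Fin n) : ContinuousAt (uncurry fun s => pd i (u s)) (t, x) :=
    continuousAt_pd (h.of_le one_le_two) i
  have h4 (i : Fin n) : ContinuousAt (uncurry fun s => pd i (tderiv u s)) (t, x) :=
    continuousAt_pd (contDiffAt_tderiv h) i
  unfold energyDensityDeriv
  fun_prop (disch := positivity)

theorem hasDerivAt_energyDensity (hu : IsSol n μ u) (ht : 0 < t) (x : Fin n → ℝ) :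
    HasDerivAt (energyDensity μ u · x) (energyDensityDeriv μ u t x) t := by
  have h := hu.contDiffAt ht x
  have hu' : HasDerivAt (u · x) (tderiv u t x) t :=
    hasDerivAt_tderiv (h.differentiableAt two_ne_zero)
  have hut : HasDerivAt (tderiv u · x) (tderiv2 u t x) t :=
    hasDerivAt_tderiv ((contDiffAt_tderiv h).differentiableAt one_ne_zero)
  have hgrad : HasDerivAt (fun s => gradSq (u s) x)
      (2 * ∑ i, pd i (u t) x * pd i (tderiv u t) x) t := by
    have hpd (i : Fin n) : HasDerivAt (fun s => pd i (u s) x) (pd i (tderiv u t) x) t :=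
      tderiv_pd_eq_pd_tderiv h i ▸
        hasDerivAt_tderiv ((contDiffAt_pd h i).differentiableAt one_ne_zero)
    refine (HasDerivAt.fun_sum fun i _ => (hpd i).fun_pow 2).congr_deriv ?_
    rw [Finset.mul_sum]
    exact Finset.sum_congr rfl fun i _ => by ring
  have hden : HasDerivAt (fun s : ℝ => 1 + s) 1 t := (hasDerivAt_id t).const_add 1
  refine (((hgrad.fun_add (hut.fun_pow 2)).const_mul (1 / 2)).fun_add
    (((hu'.fun_mul hut).fun_add (((hu'.fun_pow 2).const_mul (μ - 1)).fun_div (hden.const_mul 2)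
      (by positivity))).fun_div hden (by positivity))).congr_deriv ?_
  simp only [energyDensityDeriv]
  field_simp
  ring

theorem integrable_energyDensity (hu : IsSol n μ u) (hK : IsCompact K)
    (hvan : EqOn (uncurry u) 0 (Ioo 0 T ×ˢ Kᶜ)) (ht : t ∈ Ioo 0 T) :
    Integrable (energyDensity μ u t) :=
  (hu.continuous_energyDensity ht.1).integrable_of_hasCompactSupport <| .intro hK fun _ hx =>
    energyDensity_eq_zero (isOpen_Ioo.prod hK.isClosed.isOpen_compl) hvan ⟨ht, hx⟩

theorem E4_eq_integral_energyDensity (hu : IsSol n μ u) (hK : IsCompact K)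
    (hvan : EqOn (uncurry u) 0 (Ioo 0 T ×ˢ Kᶜ)) (ht : t ∈ Ioo 0 T) :
    E4 μ u t = ∫ x, energyDensity μ u t x := by
  have hU : IsOpen (Ioo 0 T ×ˢ Kᶜ) := isOpen_Ioo.prod hK.isClosed.isOpen_compl
  have h0 := (hu.differentiable ht.1).continuous
  have h1 := (hu.differentiable_tderiv ht.1).continuous
  have h2 := continuous_pd_slice (hu.contDiffAt_one ht.1)
  have hE0 : Integrable fun x => gradSq (u t) x + tderiv u t x ^ 2 := by
    refine Continuous.integrable_of_hasCompactSupport (by unfold gradSq; fun_prop) (.intro hK ?_)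
    intro x hx
    have hq : (t, x) ∈ Ioo 0 T ×ˢ Kᶜ := ⟨ht, hx⟩
    simp [gradSq, tderiv_eq_zero_of_eqOn hU hvan hq, pd_eq_zero_of_eqOn hU hvan hq]
  have hE3 : Integrable fun x => u t x * tderiv u t x + (μ - 1) * u t x ^ 2 / (2 * (1 + t)) := by
    refine Continuous.integrable_of_hasCompactSupport (by fun_prop) (.intro hK ?_)
    intro x hx
    simp [show u t x = 0 from hvan (show (t, x) ∈ Ioo 0 T ×ˢ Kᶜ from ⟨ht, hx⟩)]
  rw [E4, E0, E3, ← integral_const_mul, ← integral_div,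
    ← integral_add (hE0.const_mul _) (hE3.div_const _)]
  rfl

theorem hasDerivAt_E4 (hu : IsSol n μ u) (hK : IsCompact K)
    (hvan : EqOn (uncurry u) 0 (Ioo 0 T ×ˢ Kᶜ)) (ht : t ∈ Ioo 0 T) :
    HasDerivAt (E4 μ u) (∫ x, energyDensityDeriv μ u t x) t := by
  have hU : IsOpen (Ioo 0 T ×ˢ Kᶜ) := isOpen_Ioo.prod hK.isClosed.isOpen_compl
  refine (hasDerivAt_integral_of_continuousOn_of_eqOn_zero isOpen_Ioo ht hK
    (fun τ hτ => hu.continuous_energyDensity hτ.1) (hu.integrable_energyDensity hK hvan ht)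
    (fun q hq => (hu.continuousAt_energyDensityDeriv hq.1.1 q.2).continuousWithinAt)
    (fun τ hτ x hx => energyDensityDeriv_eq_zero hU hvan ⟨hτ, hx⟩)
    (fun τ hτ x => hu.hasDerivAt_energyDensity hτ.1 x)).congr_of_eventuallyEq ?_
  filter_upwards [isOpen_Ioo.mem_nhds ht] with τ hτ
  exact hu.E4_eq_integral_energyDensity hK hvan hτ

theorem energyDensityDeriv_eq (hu : IsSol n μ u) (ht : 0 ≤ t) (x : Fin n → ℝ) :
    energyDensityDeriv μ u t x =
      -(2 / (1 + t) * energyDensity μ u t x + (μ - 2) / (1 + t) * tderiv u t x ^ 2) +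
        ∑ i, ((tderiv u t x + (1 + t)⁻¹ * u t x) * pd i (pd i (u t)) x +
          (pd i (tderiv u t) x + (1 + t)⁻¹ * pd i (u t) x) * pd i (u t) x) := by
  have hpde : tderiv2 u t x = lap (u t) x - μ / (1 + t) * tderiv u t x := by
    linarith [hu.2.1 t ht x]
  have hsum : ∑ i, ((tderiv u t x + (1 + t)⁻¹ * u t x) * pd i (pd i (u t)) x +
      (pd i (tderiv u t) x + (1 + t)⁻¹ * pd i (u t) x) * pd i (u t) x) =
      (tderiv u t x + (1 + t)⁻¹ * u t x) * lap (u t) x +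
        ∑ i, pd i (u t) x * pd i (tderiv u t) x + (1 + t)⁻¹ * gradSq (u t) x := by
    simp only [lap, gradSq, Finset.mul_sum, ← Finset.sum_add_distrib]
    exact Finset.sum_congr rfl fun i _ => by ring
  have : 1 + t ≠ 0 := by positivity
  rw [hsum, energyDensityDeriv, energyDensity, hpde]
  field_simp
  ring

theorem integral_energyDensityDeriv (hu : IsSol n μ u) (hK : IsCompact K)
    (hvan : EqOn (uncurry u) 0 (Ioo 0 T ×ˢ Kᶜ)) (ht : t ∈ Ioo 0 T) :
    ∫ x, energyDensityDeriv μ u t x =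
      -(2 / (1 + t) * (∫ x, energyDensity μ u t x) +
        (μ - 2) / (1 + t) * ∫ x, tderiv u t x ^ 2) := by
  have hU : IsOpen (Ioo 0 T ×ˢ Kᶜ) := isOpen_Ioo.prod hK.isClosed.isOpen_compl
  have hvan_t (x : Fin n → ℝ) (hx : x ∉ K) : u t x = 0 ∧ tderiv u t x = 0 :=
    ⟨hvan (show (t, x) ∈ _ from ⟨ht, hx⟩), tderiv_eq_zero_of_eqOn hU hvan ⟨ht, hx⟩⟩
  set f : (Fin n → ℝ) → ℝ := fun y => tderiv u t y + (1 + t)⁻¹ * u t y with hf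
  have hdf : Differentiable ℝ f :=
    (hu.differentiable_tderiv ht.1).add ((hu.differentiable ht.1).const_mul _)
  have hpdf (i : Fin n) : pd i f = fun y => pd i (tderiv u t) y + (1 + t)⁻¹ * pd i (u t) y :=
    funext fun y =>
      pd_add_const_mul (hu.differentiable_tderiv ht.1 y) (hu.differentiable ht.1 y) _ i
  have hcpdf (i : Fin n) : Continuous (pd i f) := by
    rw [hpdf]
    exact (hu.continuous_pd_tderiv ht.1 i).add
      (continuous_const.mul (continuous_pd_slice (hu.contDiffAt_one ht.1) i))
  have hfc : HasCompactSupport f := .intro hK fun x hx => by simp [hf, hvan_t x hx]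
  have hibp (i : Fin n) := integral_mul_pd_add_pd_mul_eq_zero i hdf (hu.differentiable_pd ht.1 i)
    (hcpdf i) (hu.continuous_pd_pd ht.1 i) hfc
  have hibp_int (i : Fin n) := integrable_mul_pd_add_pd_mul i hdf (hu.differentiable_pd ht.1 i)
    (hcpdf i) (hu.continuous_pd_pd ht.1 i) hfc
  have hE : Integrable fun x => 2 / (1 + t) * energyDensity μ u t x :=
    (hu.integrable_energyDensity hK hvan ht).const_mul _
  have hut : Integrable fun x => (μ - 2) / (1 + t) * tderiv u t x ^ 2 :=
    (((hu.differentiable_tderiv ht.1).continuous.pow 2).integrable_of_hasCompactSupport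
      (.intro hK fun x hx => by simp [hvan_t x hx])).const_mul _
  have hpoint (x : Fin n → ℝ) : energyDensityDeriv μ u t x =
      -(2 / (1 + t) * energyDensity μ u t x + (μ - 2) / (1 + t) * tderiv u t x ^ 2) +
        ∑ i, (f x * pd i (pd i (u t)) x + pd i f x * pd i (u t) x) := by
    simp only [hpdf]
    exact hu.energyDensityDeriv_eq ht.1.le x
  rw [integral_congr_ae (.of_forall hpoint),
    integral_add (hE.fun_add hut).fun_neg (integrable_finsetSum _ fun i _ => hibp_int i),
    integral_finsetSum _ fun i _ => hibp_int i, Finset.sum_eq_zero fun i _ => hibp i, add_zero,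
    integral_neg, integral_add hE hut, integral_const_mul, integral_const_mul]

end IsSol

theorem statement8_general (n : ℕ) (μ : ℝ)
    (u : ℝ → (Fin n → ℝ) → ℝ) (hu : IsSol n μ u) :
    ∀ t : ℝ, 0 < t →
      HasDerivAt (fun τ => E4 μ u τ)
        (-((2 / (1 + t)) * E4 μ u t
          + ((μ - 2) / (1 + t)) * ∫ x, (tderiv u t x) ^ 2)) t := by
  intro t ht
  obtain ⟨K, hK, hKu⟩ := hu.2.2 (t + 1) (by linarith)
  have hvan : EqOn (uncurry u) 0 (Ioo 0 (t + 1) ×ˢ Kᶜ) := fun q hq =>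
    hKu q.1 (Ioo_subset_Icc_self hq.1) q.2 hq.2
  have ht' : t ∈ Ioo 0 (t + 1) := ⟨ht, by linarith⟩
  have hE4 := hu.hasDerivAt_E4 hK hvan ht'
  rwa [hu.integral_energyDensityDeriv hK hvan ht',
    ← hu.E4_eq_integral_energyDensity hK hvan ht'] at hE4

theorem statement8 (n : ℕ) (hn : 1 ≤ n) (μ : ℝ) (hμ : 2 < μ)
    (u : ℝ → (Fin n → ℝ) → ℝ) (hu : IsSol n μ u) :
    ∀ t : ℝ, 0 < t →
      HasDerivAt (fun τ => E4 μ u τ)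
        (-((2 / (1 + t)) * E4 μ u t
          + ((μ - 2) / (1 + t)) * ∫ x, (tderiv u t x) ^ 2)) t :=
  statement8_general n μ u hu
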